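/- Let F : ℝⁿ → ℝᵐ satisfy the local tangential cone condition with constant η ∈ [0, 1/2), and suppose x⋆ ∈ ℝⁿ satisfies F(x⋆) = 0. Let x_k ∈ ℝⁿ be such that F(x_k) ≠ 0, F'(x_k) has full column rank, and every row ∇F_i(x_k) is nonzero. For each i ∈ {1,…,m}, set p_i = F_i(x_k)² / ‖F(x_k)‖₂² and let y_i = x_k − (F_i(x_k) / ‖∇F_i(x_k)‖₂²) ∇F_i(x_k) be the nonlinear Kaczmarz update with index i. Then the one-step conditional expectation of the nonlinear randomized Kaczmarz method satisfies Σ_{i=1}^{m} p_i ‖y_i − x⋆‖₂² ≤ (1 − (1−2η) / ((1+η)² m κ_F²(F'(x_k)))) ‖x_k − x⋆‖₂², where κ_F(A) = ‖A‖_F / σ_min(A). -/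

import Mathlib

open Matrix

/-- The singular values of a real matrix `A`: square roots of the eigenvalues of `AᵀA`. -/
noncomputable def singVals {m' : Type*} [Fintype m'] {n : ℕ}
    (A : Matrix m' (Fin n) ℝ) : Fin n → ℝ :=
  fun j => Real.sqrt ((show (Aᵀ * A).IsHermitian by
    rw [Matrix.IsHermitian, Matrix.conjTranspose_eq_transpose_of_trivial, Matrix.transpose_mul,
      Matrix.transpose_transpose]).eigenvalues j)

/-- The smallest singular value of `A`. -/
noncomputable def sigmaMin {m' : Type*} [Fintype m'] {n : ℕ}
    (A : Matrix m' (Fin n) ℝ) : ℝ :=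
  ⨅ j, singVals A j

/-- The Frobenius norm of `A`. -/
noncomputable def frobNorm {m' : Type*} [Fintype m'] {n : ℕ}
    (A : Matrix m' (Fin n) ℝ) : ℝ :=
  Real.sqrt (∑ i, ∑ j, (A i j) ^ 2)

/-- The scaled condition number `κ_F(A) = ‖A‖_F / σ_min(A)`. -/
noncomputable def kappaF {m' : Type*} [Fintype m'] {n : ℕ}
    (A : Matrix m' (Fin n) ℝ) : ℝ :=
  frobNorm A / sigmaMin A

/-! With `d = x_k - x⋆`, the tangential cone condition at the pair `(x_k, x⋆)` says that
`⟪d, ∇F_i(x_k)⟫` lies within `η |F_i(x_k)|` of `F_i(x_k)`. Hence every Kaczmarz step contracts,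
`‖y_i - x⋆‖² ≤ ‖d‖² - (1 - 2η) F_i(x_k)² / ‖∇F_i(x_k)‖²`, and averaging with the weights `p_i`
lowers `‖d‖²` by `(1 - 2η) T / S`, where `S = ‖F(x_k)‖²` and `T = Σ F_i(x_k)⁴ / ‖∇F_i(x_k)‖²`.
Cauchy–Schwarz gives `S² ≤ T ‖F'(x_k)‖_F²`, while the Rayleigh bound
`σ_min² ‖d‖² ≤ ‖F'(x_k) d‖² = Σ ⟪d, ∇F_i(x_k)⟫²` and the cone condition give
`σ_min² ‖d‖² ≤ (1 + η)² S`. Together, `T / S ≥ ‖d‖² / ((1 + η)² κ_F²)`, and a fortiori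
`T / S ≥ ‖d‖² / ((1 + η)² m κ_F²)`. -/

theorem one_sub_mul_sq_le_mul_of_abs_sub_le {η f q : ℝ} (h : |f - q| ≤ η * |f|) :
    (1 - η) * f ^ 2 ≤ f * q := by
  have : f * (f - q) ≤ η * f ^ 2 :=
    calc f * (f - q) ≤ |f| * |f - q| := abs_mul f (f - q) ▸ le_abs_self _
      _ ≤ |f| * (η * |f|) := mul_le_mul_of_nonneg_left h (abs_nonneg f)
      _ = η * f ^ 2 := by rw [← sq_abs f]; ring
  linarith

theorem sq_le_one_add_sq_mul_sq_of_abs_sub_le {η f q : ℝ} (h : |f - q| ≤ η * |f|) :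
    q ^ 2 ≤ (1 + η) ^ 2 * f ^ 2 := by
  have hq : |q| ≤ (1 + η) * |f| := by
    linarith [abs_sub_abs_le_abs_sub q f, abs_sub_comm q f]
  calc q ^ 2 = |q| ^ 2 := (sq_abs q).symm
    _ ≤ ((1 + η) * |f|) ^ 2 := pow_le_pow_left₀ (abs_nonneg q) hq 2
    _ = (1 + η) ^ 2 * f ^ 2 := by rw [mul_pow, sq_abs]

section Kaczmarz

variable {E : Type*} [NormedAddCommGroup E] [InnerProductSpace ℝ E]

theorem norm_sub_kaczmarz_sq_le {d g : E} {f η : ℝ} (h : |f - inner ℝ d g| ≤ η * |f|) :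
    ‖d - (f / ‖g‖ ^ 2) • g‖ ^ 2 ≤ ‖d‖ ^ 2 - (1 - 2 * η) * (f ^ 2 / ‖g‖ ^ 2) := by
  have hdiv : (1 - η) * (f ^ 2 / ‖g‖ ^ 2) ≤ f / ‖g‖ ^ 2 * inner ℝ d g := by
    rw [← mul_div_assoc, div_mul_eq_mul_div]
    exact div_le_div_of_nonneg_right (one_sub_mul_sq_le_mul_of_abs_sub_le h) (by positivity)
  have hsq : (f / ‖g‖ ^ 2) ^ 2 * ‖g‖ ^ 2 = f ^ 2 / ‖g‖ ^ 2 := by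
    rcases eq_or_ne (‖g‖ ^ 2) 0 with h0 | h0
    · simp [h0]
    · field_simp
  rw [norm_sub_sq_real, real_inner_smul_right, norm_smul, mul_pow, Real.norm_eq_abs, sq_abs, hsq]
  linarith

theorem sum_weighted_norm_sub_kaczmarz_sq_le {ι : Type*} [Fintype ι] {η : ℝ} {f : ι → ℝ}
    {g : ι → E} {d : E} (hf : ∑ i, f i ^ 2 ≠ 0) (h : ∀ i, |f i - inner ℝ d (g i)| ≤ η * |f i|) :
    ∑ i, f i ^ 2 / (∑ j, f j ^ 2) * ‖d - (f i / ‖g i‖ ^ 2) • g i‖ ^ 2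
      ≤ ‖d‖ ^ 2 - (1 - 2 * η) * ((∑ i, (f i ^ 2) ^ 2 / ‖g i‖ ^ 2) / ∑ i, f i ^ 2) := by
  set S := ∑ j, f j ^ 2
  calc _ ≤ ∑ i, f i ^ 2 / S * (‖d‖ ^ 2 - (1 - 2 * η) * (f i ^ 2 / ‖g i‖ ^ 2)) :=
        Finset.sum_le_sum fun i _ ↦
          mul_le_mul_of_nonneg_left (norm_sub_kaczmarz_sq_le (h i)) (by positivity)
    _ = _ := by
        rw [Finset.sum_congr rfl fun i _ ↦ mul_sub _ _ _, Finset.sum_sub_distrib, ← Finset.sum_mul,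
          ← Finset.sum_div, div_self hf, one_mul, Finset.sum_div, Finset.mul_sum]
        congr 1
        exact Finset.sum_congr rfl fun i _ ↦ by ring

end Kaczmarz

theorem Matrix.IsHermitian.mul_dotProduct_self_le_dotProduct_mulVec {n : Type*} [Fintype n]
    [DecidableEq n] {M : Matrix n n ℝ} (hM : M.IsHermitian) {c : ℝ}
    (hc : ∀ j, c ≤ hM.eigenvalues j) (x : n → ℝ) : c * (x ⬝ᵥ x) ≤ x ⬝ᵥ (M *ᵥ x) := by
  set U : Matrix n n ℝ := (hM.eigenvectorUnitary : Matrix n n ℝ)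
  have hshift : M - c • 1 = U * diagonal (fun j ↦ hM.eigenvalues j - c) * Uᴴ := by
    rw [← diagonal_sub, ← smul_one_eq_diagonal, mul_sub, sub_mul, mul_smul_comm, smul_mul_assoc,
      mul_one, ← star_eq_conjTranspose, Unitary.mul_star_self_of_mem hM.eigenvectorUnitary.2]
    conv_lhs => rw [hM.spectral_theorem]
    rfl
  have hpsd : (M - c • 1).PosSemidef := hshift ▸
    (posSemidef_diagonal_iff.2 fun j ↦ sub_nonneg.2 (hc j)).mul_mul_conjTranspose_same U
  simpa only [star_trivial, sub_mulVec, smul_mulVec, one_mulVec, dotProduct_sub, dotProduct_smul,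
    smul_eq_mul, sub_nonneg] using hpsd.dotProduct_mulVec_nonneg x

theorem sq_sigmaMin_mul_dotProduct_self_le {m' : Type*} [Fintype m'] {n : ℕ}
    (A : Matrix m' (Fin n) ℝ) (x : Fin n → ℝ) :
    sigmaMin A ^ 2 * (x ⬝ᵥ x) ≤ (A *ᵥ x) ⬝ᵥ (A *ᵥ x) := by
  have hM : (Aᵀ * A).IsHermitian := isHermitian_conjTranspose_mul_self A
  have hσ : ∀ j, sigmaMin A ^ 2 ≤ hM.eigenvalues j := fun j ↦ by
    have hle : sigmaMin A ≤ singVals A j := ciInf_le (Set.finite_range _).bddBelow j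
    calc sigmaMin A ^ 2 ≤ singVals A j ^ 2 :=
          pow_le_pow_left₀ (Real.iInf_nonneg fun _ ↦ Real.sqrt_nonneg _) hle 2
      _ = hM.eigenvalues j := Real.sq_sqrt (eigenvalues_conjTranspose_mul_self_nonneg A j)
  calc sigmaMin A ^ 2 * (x ⬝ᵥ x) ≤ x ⬝ᵥ ((Aᵀ * A) *ᵥ x) :=
        hM.mul_dotProduct_self_le_dotProduct_mulVec hσ x
    _ = (A *ᵥ x) ⬝ᵥ (A *ᵥ x) := by rw [← mulVec_mulVec, dotProduct_mulVec, vecMul_transpose]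

section Rows

variable {ι : Type*} [Fintype ι] {n : ℕ} (g : ι → EuclideanSpace ℝ (Fin n))

theorem frobNorm_sq_of_rows : frobNorm (of fun i j ↦ g i j) ^ 2 = ∑ i, ‖g i‖ ^ 2 := by
  rw [frobNorm, Real.sq_sqrt (by positivity)]
  simp [EuclideanSpace.norm_sq_eq]

theorem sq_sigmaMin_of_rows_mul_norm_sq_le (d : EuclideanSpace ℝ (Fin n)) :
    sigmaMin (of fun i j ↦ g i j) ^ 2 * ‖d‖ ^ 2 ≤ ∑ i, inner ℝ d (g i) ^ 2 :=
  calc sigmaMin (of fun i j ↦ g i j) ^ 2 * ‖d‖ ^ 2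
        = sigmaMin (of fun i j ↦ g i j) ^ 2 * (d ⬝ᵥ d) := by
          rw [← real_inner_self_eq_norm_sq, EuclideanSpace.inner_eq_star_dotProduct]; rfl
    _ ≤ ((of fun i j ↦ g i j) *ᵥ d) ⬝ᵥ ((of fun i j ↦ g i j) *ᵥ d) :=
        sq_sigmaMin_mul_dotProduct_self_le _ d
    _ = ∑ i, inner ℝ d (g i) ^ 2 := by simp [dotProduct, mulVec, PiLp.inner_apply, sq]

end Rows

theorem div_mul_sq_div_le_div {D S T c m φ σ : ℝ} (hS : 0 < S) (hm : 1 ≤ m) (hc : 0 ≤ c)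
    (hST : S ^ 2 ≤ T * φ ^ 2) (hσ : σ ^ 2 * D ≤ c * S) :
    D / (c * m * (φ / σ) ^ 2) ≤ T / S := by
  have hSφ : S ≤ T / S * φ ^ 2 := by
    rw [div_mul_eq_mul_div, le_div_iff₀ hS, ← sq]; exact hST
  have hT : 0 ≤ T / S := by nlinarith
  rw [div_pow, ← mul_div_assoc, div_div_eq_mul_div]
  refine div_le_of_le_mul₀ (by positivity) hT ?_
  calc D * σ ^ 2 ≤ c * S := by linarith
    _ ≤ c * (T / S * φ ^ 2) := by gcongr
    _ = T / S * (c * 1 * φ ^ 2) := by ring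
    _ ≤ T / S * (c * m * φ ^ 2) := by gcongr

theorem nrk_expected_step_general
    {n m : ℕ}
    (F : Fin m → EuclideanSpace ℝ (Fin n) → ℝ)
    (grad : Fin m → EuclideanSpace ℝ (Fin n) → EuclideanSpace ℝ (Fin n))
    (η : ℝ) (hη : η < 1 / 2)
    -- local tangential cone condition with constant η
    (hltcc : ∀ i (x₁ x₂ : EuclideanSpace ℝ (Fin n)),
      |F i x₁ - F i x₂ - ∑ j, grad i x₁ j * (x₁ j - x₂ j)| ≤ η * |F i x₁ - F i x₂|)
    (xstar : EuclideanSpace ℝ (Fin n)) (hstar : ∀ i, F i xstar = 0)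
    (xk : EuclideanSpace ℝ (Fin n))
    -- F(x_k) ≠ 0
    (hFk : ∃ i, F i xk ≠ 0)
    -- the full Jacobian F'(x_k)
    (J : Matrix (Fin m) (Fin n) ℝ)
    (hJdef : J = Matrix.of fun (i : Fin m) (j : Fin n) => grad i xk j)
    -- every row ∇F_i(x_k) is nonzero
    (hrows : ∀ i, grad i xk ≠ 0)
    -- probabilities p_i = F_i(x_k)² / ‖F(x_k)‖₂²
    (p : Fin m → ℝ) (hp : ∀ i, p i = (F i xk) ^ 2 / ∑ j, (F j xk) ^ 2)
    -- nonlinear Kaczmarz updates y_i = x_k − (F_i(x_k)/‖∇F_i(x_k)‖₂²) ∇F_i(x_k)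
    (y : Fin m → EuclideanSpace ℝ (Fin n))
    (hy : ∀ i, y i = xk - (F i xk / ‖grad i xk‖ ^ 2) • grad i xk) :
    ∑ i, p i * ‖y i - xstar‖ ^ 2
      ≤ (1 - (1 - 2 * η) / ((1 + η) ^ 2 * (m : ℝ) * kappaF J ^ 2))
          * ‖xk - xstar‖ ^ 2 := by
  obtain ⟨i₀, hi₀⟩ := hFk
  set d := xk - xstar
  set S := ∑ i, F i xk ^ 2
  set T := ∑ i, (F i xk ^ 2) ^ 2 / ‖grad i xk‖ ^ 2
  have hcone : ∀ i, |F i xk - inner ℝ d (grad i xk)| ≤ η * |F i xk| := fun i ↦ by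
    simpa [hstar, d, PiLp.inner_apply, mul_comm] using hltcc i xk xstar
  have hS : 0 < S := Finset.sum_pos' (fun i _ ↦ sq_nonneg _) ⟨i₀, Finset.mem_univ _, by positivity⟩
  have hstep : ∑ i, p i * ‖y i - xstar‖ ^ 2 ≤ ‖d‖ ^ 2 - (1 - 2 * η) * (T / S) := by
    simpa only [hp, hy, sub_right_comm _ _ xstar] using
      sum_weighted_norm_sub_kaczmarz_sq_le hS.ne' hcone
  have hCS : S ^ 2 ≤ T * frobNorm J ^ 2 := by
    rw [hJdef, frobNorm_sq_of_rows]
    exact Finset.sum_sq_le_sum_mul_sum_of_sq_le_mul _ (fun i _ ↦ by positivity)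
      (fun i _ ↦ by positivity) fun i _ ↦ (div_mul_cancel₀ _ (by simpa using hrows i)).ge
  have hray : sigmaMin J ^ 2 * ‖d‖ ^ 2 ≤ (1 + η) ^ 2 * S := by
    rw [hJdef, Finset.mul_sum]
    exact (sq_sigmaMin_of_rows_mul_norm_sq_le _ d).trans <|
      Finset.sum_le_sum fun i _ ↦ sq_le_one_add_sq_mul_sq_of_abs_sub_le (hcone i)
  calc ∑ i, p i * ‖y i - xstar‖ ^ 2 ≤ ‖d‖ ^ 2 - (1 - 2 * η) * (T / S) := hstep
    _ ≤ ‖d‖ ^ 2 - (1 - 2 * η) * (‖d‖ ^ 2 / ((1 + η) ^ 2 * m * kappaF J ^ 2)) :=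
      sub_le_sub_left (mul_le_mul_of_nonneg_left (div_mul_sq_div_le_div hS
        (Nat.one_le_cast.2 i₀.pos) (sq_nonneg _) hCS hray) (by linarith)) _
    _ = _ := by ring

/-- Theorem 1: the one-step conditional expectation of the nonlinear
randomized Kaczmarz method, with probabilities `p_i = F_i(x_k)²/‖F(x_k)‖₂²` and updates
`y_i = x_k − (F_i(x_k)/‖∇F_i(x_k)‖₂²) ∇F_i(x_k)`, satisfies
`Σ_i p_i ‖y_i − x⋆‖₂² ≤ (1 − (1−2η)/((1+η)² m κ_F²(F'(x_k)))) ‖x_k − x⋆‖₂²`. -/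
theorem nrk_expected_step
    {n m : ℕ}
    (F : Fin m → EuclideanSpace ℝ (Fin n) → ℝ)
    (grad : Fin m → EuclideanSpace ℝ (Fin n) → EuclideanSpace ℝ (Fin n))
    (η : ℝ) (hη0 : 0 ≤ η) (hη : η < 1 / 2)
    -- F is differentiable with Jacobian whose i-th row is ∇F_i
    (hdiff : ∀ i x, HasGradientAt (F i) (grad i x) x)
    -- local tangential cone condition with constant η
    (hltcc : ∀ i (x₁ x₂ : EuclideanSpace ℝ (Fin n)),
      |F i x₁ - F i x₂ - ∑ j, grad i x₁ j * (x₁ j - x₂ j)| ≤ η * |F i x₁ - F i x₂|)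
    (xstar : EuclideanSpace ℝ (Fin n)) (hstar : ∀ i, F i xstar = 0)
    (xk : EuclideanSpace ℝ (Fin n))
    -- F(x_k) ≠ 0
    (hFk : ∃ i, F i xk ≠ 0)
    -- the full Jacobian F'(x_k)
    (J : Matrix (Fin m) (Fin n) ℝ)
    (hJdef : J = Matrix.of fun (i : Fin m) (j : Fin n) => grad i xk j)
    -- F'(x_k) has full column rank
    (hrank : J.rank = n)
    -- every row ∇F_i(x_k) is nonzero
    (hrows : ∀ i, grad i xk ≠ 0)
    -- probabilities p_i = F_i(x_k)² / ‖F(x_k)‖₂²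
    (p : Fin m → ℝ) (hp : ∀ i, p i = (F i xk) ^ 2 / ∑ j, (F j xk) ^ 2)
    -- nonlinear Kaczmarz updates y_i = x_k − (F_i(x_k)/‖∇F_i(x_k)‖₂²) ∇F_i(x_k)
    (y : Fin m → EuclideanSpace ℝ (Fin n))
    (hy : ∀ i, y i = xk - (F i xk / ‖grad i xk‖ ^ 2) • grad i xk) :
    ∑ i, p i * ‖y i - xstar‖ ^ 2
      ≤ (1 - (1 - 2 * η) / ((1 + η) ^ 2 * (m : ℝ) * kappaF J ^ 2))
          * ‖xk - xstar‖ ^ 2 :=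
  nrk_expected_step_general F grad η hη hltcc xstar hstar xk hFk J hJdef hrows p hp y hy
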